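/- Let R be a discrete valuation domain with prime element p and let λ be a limit ordinal. A short exact sequence 0 → A → B →^π C → 0 of torsion R-modules is λ-balanced if and only if for every ordinal β < λ every homomorphism f: P_β → C lifts along π to a homomorphism P_β → B; equivalently, if and only if 0 → Hom_R(P_β, A) → Hom_R(P_β, B) → Hom_R(P_β, C) → 0 is exact for each β < λ. -/

import Mathlib

universe u v w

open Ordinal

noncomputable def pPow (R : Type u) [CommRing R] (p : R) (G : Type v) [AddCommGroup G]
    [Module R G] (σ : Ordinal.{w}) : Submodule R G :=
  Ordinal.limitRecOn σ ⊤ (fun _ N => N.map (LinearMap.lsmul R G p))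
    (fun o _ ih => ⨅ ρ : Set.Iio o, ih ρ.1 ρ.2)

/-- Generators of the Walker module `P β`: strictly decreasing finite sequences of ordinals
starting with `β` (encoded by their tails). -/
def WalkerGen (β : Ordinal.{w}) : Type (w + 1) :=
  {l : List Ordinal.{w} // (β :: l).Chain' (· > ·)}

/-- The defining relation of the Walker module attached to a generator `g`:
`p • g - g'` where `g'` is obtained by deleting the last entry of `g`
(interpreted as `0` when `g` is the length-one sequence `β`). -/
noncomputable def walkerRel (R : Type u) [CommRing R] (p : R) (β : Ordinal.{w})
    (g : WalkerGen β) : WalkerGen β →₀ R :=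
  p • Finsupp.single g 1 -
    if _h : g.1 = [] then 0
    else Finsupp.single
      ⟨g.1.dropLast, g.2.sublist ((g.1.dropLast_sublist).cons₂ β)⟩ 1

/-- The Walker module `P β` over a discrete valuation domain with prime `p`. -/
noncomputable abbrev WalkerModule (R : Type u) [CommRing R] (p : R) (β : Ordinal.{w}) :=
  (WalkerGen β →₀ R) ⧸ Submodule.span R (Set.range (walkerRel R p β))

/-- The image in `P β` of a generator. -/
noncomputable def walkerMk (R : Type u) [CommRing R] (p : R) (β : Ordinal.{w})
    (g : WalkerGen β) : WalkerModule R p β :=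
  Submodule.Quotient.mk (Finsupp.single g 1)

/-- The distinguished generator `β` of the Walker module `P β`. -/
noncomputable def walkerTop (R : Type u) [CommRing R] (p : R) (β : Ordinal.{w}) :
    WalkerModule R p β :=
  walkerMk R p β ⟨[], List.isChain_singleton β⟩

/-- A submodule `N ≤ B` is `λ`-balanced: `p^σ B ⊓ N = p^σ N` and
`p^σ (B/N) = (p^σ B + N)/N` for all `σ < λ`. -/
def IsLamBalanced (R : Type u) [CommRing R] (p : R) {B : Type v} [AddCommGroup B]
    [Module R B] (lam : Ordinal.{w}) (N : Submodule R B) : Prop :=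
  ∀ σ < lam, pPow R p B σ ⊓ N = (pPow R p (↥N) σ).map N.subtype ∧
    pPow R p (B ⧸ N) σ = (pPow R p B σ ⊔ N).map N.mkQ

/-!
A homomorphism `P_β → M` amounts to elements `x_g ∈ p^{label g} M`, one per generator `g`, with
`p x_g = x_{parent g}` and `p x_β = 0`; they can be chosen generator by generator as long as each
value can be divided by `p` within the required height. So `P_β` detects the elements of
`p^β M` killed by `p`.

If `ker π` is `λ`-balanced, such a system in `C` lifts to `B` step by step: lift `c ∈ p^τ C` to
`p^τ B`, then correct by an element of `ker π ∩ p^τ B` so that it divides the lift already chosen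
at the parent. Conversely, lifting Walker homomorphisms means that every `c ∈ p^σ C` with
`p c = 0` lifts to some `b ∈ p^σ B` with `p b = 0`. Induction on the order of `c` (which is
finite since `C` is torsion over a DVR, and `σ + 1 < λ` since `λ` is a limit) gives
`p^σ C = π(p^σ B)`, and transfinite induction on `σ` gives `p^σ B ∩ ker π = p^σ (ker π)`.
-/
section pPow

variable {R : Type u} [CommRing R] {p : R} {G H : Type*} [AddCommGroup G] [Module R G]
  [AddCommGroup H] [Module R H]

variable (R p G) in
lemma pPow_zero : pPow R p G (0 : Ordinal.{w}) = ⊤ :=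
  Ordinal.limitRecOn_zero _ _ _

variable (R p G) in
lemma pPow_succ (σ : Ordinal.{w}) :
    pPow R p G (σ + 1) = (pPow R p G σ).map (LinearMap.lsmul R G p) :=
  Ordinal.limitRecOn_add_one _ _ _ _

variable (R p G) in
lemma pPow_limit {σ : Ordinal.{w}} (hσ : Order.IsSuccLimit σ) :
    pPow R p G σ = ⨅ ρ : Set.Iio σ, pPow R p G ρ.1 :=
  Ordinal.limitRecOn_limit _ _ _ _ hσ

lemma mem_pPow_succ {x : G} {σ : Ordinal.{w}} :
    x ∈ pPow R p G (σ + 1) ↔ ∃ y ∈ pPow R p G σ, p • y = x := by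
  simp [pPow_succ]

lemma mem_pPow_limit {x : G} {σ : Ordinal.{w}} (hσ : Order.IsSuccLimit σ) :
    x ∈ pPow R p G σ ↔ ∀ ρ < σ, x ∈ pPow R p G ρ := by
  simp [pPow_limit R p G hσ, Submodule.mem_iInf]

lemma pPow_antitone : Antitone (pPow R p G : Ordinal.{w} → Submodule R G) := by
  intro τ σ hτσ
  induction σ using Ordinal.limitRecOn with
  | zero => rw [nonpos_iff_eq_zero.mp hτσ]
  | add_one σ ih =>
    rcases hτσ.lt_or_eq with hlt | rfl
    · rw [pPow_succ]
      rintro _ ⟨y, hy, rfl⟩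
      exact ih (Order.lt_add_one_iff.mp hlt) (Submodule.smul_mem _ p hy)
    · exact le_rfl
  | limit σ hσ ih =>
    rcases hτσ.lt_or_eq with hlt | rfl
    · exact fun x hx => (mem_pPow_limit hσ).mp hx τ hlt
    · exact le_rfl

lemma exists_smul_eq_of_mem_pPow {x : G} {τ σ : Ordinal.{w}} (hτσ : τ < σ)
    (hx : x ∈ pPow R p G σ) : ∃ y ∈ pPow R p G τ, p • y = x :=
  mem_pPow_succ.mp (pPow_antitone (Order.add_one_le_iff.mpr hτσ) hx)

lemma map_pPow_le (φ : G →ₗ[R] H) (σ : Ordinal.{w}) :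
    (pPow R p G σ).map φ ≤ pPow R p H σ := by
  induction σ using Ordinal.limitRecOn with
  | zero => simp [pPow_zero]
  | add_one σ ih =>
    rw [pPow_succ]
    rintro _ ⟨_, ⟨y, hy, rfl⟩, rfl⟩
    exact mem_pPow_succ.mpr ⟨φ y, ih ⟨y, hy, rfl⟩, (map_smul φ p y).symm⟩
  | limit σ hσ ih =>
    rintro _ ⟨y, hy, rfl⟩
    exact (mem_pPow_limit hσ).mpr fun ρ hρ => ih ρ hρ ⟨y, (mem_pPow_limit hσ).mp hy ρ hρ, rfl⟩

lemma map_pPow_equiv (e : G ≃ₗ[R] H) (σ : Ordinal.{w}) :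
    (pPow R p G σ).map (e : G →ₗ[R] H) = pPow R p H σ := by
  refine le_antisymm (map_pPow_le _ σ) fun x hx => ?_
  exact ⟨e.symm x, map_pPow_le (e.symm : H →ₗ[R] G) σ ⟨x, hx, rfl⟩, e.apply_symm_apply x⟩

lemma map_subtype_pPow_le (N : Submodule R G) (σ : Ordinal.{w}) :
    (pPow R p N σ).map N.subtype ≤ pPow R p G σ ⊓ N :=
  le_inf (map_pPow_le _ σ) (Submodule.map_subtype_le N _)

end pPow

lemma exists_pow_smul_eq_zero_of_isTorsion {R : Type u} [CommRing R] [IsDomain R]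
    [IsDiscreteValuationRing R] {p : R} (hp : Irreducible p) {M : Type*} [AddCommGroup M]
    [Module R M] (hM : Module.IsTorsion R M) (x : M) : ∃ n : ℕ, p ^ n • x = 0 := by
  obtain ⟨r, hr⟩ := @hM x
  obtain ⟨n, u, hru⟩ :=
    IsDiscreteValuationRing.eq_unit_mul_pow_irreducible (nonZeroDivisors.ne_zero r.2) hp
  refine ⟨n, ?_⟩
  rw [Submonoid.smul_def, hru, mul_smul] at hr
  exact (smul_eq_zero_iff_eq u).mp hr

namespace WalkerGen

variable {β : Ordinal.{w}}

def root (β : Ordinal.{w}) : WalkerGen β := ⟨[], List.isChain_singleton β⟩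

def parent (g : WalkerGen β) : WalkerGen β :=
  ⟨g.1.dropLast, g.2.sublist (g.1.dropLast_sublist.cons_cons β)⟩

def label (g : WalkerGen β) : Ordinal.{w} :=
  (β :: g.1).getLast (List.cons_ne_nil _ _)

def snoc (g : WalkerGen β) (τ : Ordinal.{w}) (hτ : τ < g.label) : WalkerGen β :=
  ⟨g.1 ++ [τ], by
    rw [← List.cons_append]
    exact List.IsChain.append g.2 (List.isChain_singleton τ) fun x hx y hy => by
      rw [List.getLast?_eq_some_getLast (List.cons_ne_nil _ _), Option.mem_some_iff] at hx
      simp only [List.head?_cons, Option.mem_some_iff] at hy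
      exact hx ▸ hy ▸ hτ⟩

lemma eq_root {g : WalkerGen β} (hg : g.1 = []) : g = root β := Subtype.ext hg

lemma label_root : (root β).label = β := rfl

lemma label_le (g : WalkerGen β) : g.label ≤ β := by
  have hpair := List.pairwise_cons.mp (List.isChain_iff_pairwise.mp g.2)
  rcases eq_or_ne g.1 [] with hg | hg
  · rw [eq_root hg, label_root]
  · rw [label, List.getLast_cons hg]
    exact (hpair.1 _ (List.getLast_mem hg)).le

lemma label_lt_label_parent (g : WalkerGen β) (hg : g.1 ≠ []) :
    g.label < g.parent.label := by
  have hchain := g.2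
  rw [← List.dropLast_append_getLast hg, ← List.cons_append] at hchain
  exact List.isChain_append.mp hchain |>.2.2 _
    (by rw [List.getLast?_eq_some_getLast (List.cons_ne_nil _ _)]; rfl) _
    (by simp [label, List.getLast_cons hg])

lemma snoc_ne_nil (g : WalkerGen β) (τ : Ordinal.{w}) (hτ : τ < g.label) :
    (g.snoc τ hτ).1 ≠ [] := by
  simp [snoc]

lemma parent_snoc (g : WalkerGen β) (τ : Ordinal.{w}) (hτ : τ < g.label) :
    (g.snoc τ hτ).parent = g :=
  Subtype.ext (by simp [parent, snoc])

lemma label_snoc (g : WalkerGen β) (τ : Ordinal.{w}) (hτ : τ < g.label) :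
    (g.snoc τ hτ).label = τ := by
  simp [label, snoc]

lemma length_parent_lt (g : WalkerGen β) (hg : g.1 ≠ []) : g.parent.1.length < g.1.length := by
  simp only [parent, List.length_dropLast]
  exact Nat.sub_lt (List.length_pos_of_ne_nil hg) one_pos

end WalkerGen

section WalkerModule

open WalkerGen

variable {R : Type u} [CommRing R] {p : R} {β : Ordinal.{w}} {G : Type*} [AddCommGroup G]
  [Module R G]

lemma walkerRel_of_eq_nil (g : WalkerGen β) (hg : g.1 = []) :
    walkerRel R p β g = p • Finsupp.single g 1 := by
  unfold walkerRel
  split_ifs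
  exact sub_zero _

lemma walkerRel_of_ne_nil (g : WalkerGen β) (hg : g.1 ≠ []) :
    walkerRel R p β g = p • Finsupp.single g 1 - Finsupp.single g.parent 1 := by
  rw [walkerRel, dif_neg hg]
  rfl

lemma smul_walkerMk_of_ne_nil (g : WalkerGen β) (hg : g.1 ≠ []) :
    p • walkerMk R p β g = walkerMk R p β g.parent := by
  unfold walkerMk
  rw [← Submodule.Quotient.mk_smul, Submodule.Quotient.eq]
  exact Submodule.subset_span ⟨g, walkerRel_of_ne_nil g hg⟩

lemma smul_walkerTop : p • walkerTop R p β = 0 := by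
  unfold walkerTop walkerMk
  rw [← Submodule.Quotient.mk_smul, Submodule.Quotient.mk_eq_zero]
  exact Submodule.subset_span ⟨root β, walkerRel_of_eq_nil _ rfl⟩

lemma walkerModule_hom_ext {f f' : WalkerModule R p β →ₗ[R] G}
    (h : ∀ g, f (walkerMk R p β g) = f' (walkerMk R p β g)) : f = f' :=
  Submodule.linearMap_qext _ <| Finsupp.lhom_ext' fun g =>
    LinearMap.ext_ring (h g)

variable (R p) in
noncomputable def walkerLift (v : WalkerGen β → G) (hroot : p • v (root β) = 0)
    (hparent : ∀ g : WalkerGen β, g.1 ≠ [] → p • v g = v g.parent) :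
    WalkerModule R p β →ₗ[R] G :=
  (Submodule.span R (Set.range (walkerRel R p β))).liftQ (Finsupp.linearCombination R v) <| by
    rw [Submodule.span_le]
    rintro _ ⟨g, rfl⟩
    rw [SetLike.mem_coe, LinearMap.mem_ker]
    by_cases hg : g.1 = []
    · rw [walkerRel_of_eq_nil g hg, map_smul, Finsupp.linearCombination_single, one_smul,
        eq_root hg, hroot]
    · rw [walkerRel_of_ne_nil g hg, map_sub, map_smul, Finsupp.linearCombination_single,
        Finsupp.linearCombination_single, one_smul, one_smul, hparent g hg]
      exact sub_self _

lemma walkerLift_walkerMk (v : WalkerGen β → G) (hroot : p • v (root β) = 0)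
    (hparent : ∀ g : WalkerGen β, g.1 ≠ [] → p • v g = v g.parent) (g : WalkerGen β) :
    walkerLift R p v hroot hparent (walkerMk R p β g) = v g := by
  simp [walkerLift, walkerMk]

lemma map_walkerMk_mem_pPow (f : WalkerModule R p β →ₗ[R] G) (g : WalkerGen β) :
    f (walkerMk R p β g) ∈ pPow R p G g.label := by
  induction h : g.label using WellFoundedLT.induction generalizing g with
  | ind σ ih =>
  have hsmul : ∀ τ < σ, f (walkerMk R p β g) ∈ pPow R p G (τ + 1) := fun τ hτ => by
    rw [← h] at hτ
    rw [← parent_snoc g τ hτ, ← smul_walkerMk_of_ne_nil _ (snoc_ne_nil g τ hτ), map_smul]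
    exact mem_pPow_succ.mpr ⟨_, ih τ (h ▸ hτ) _ (label_snoc g τ hτ), rfl⟩
  rcases Ordinal.zero_or_succ_or_isSuccLimit σ with rfl | ⟨ρ, rfl⟩ | hσ
  · simp [pPow_zero]
  · rw [Order.succ_eq_add_one]
    exact hsmul ρ (Order.lt_succ ρ)
  · exact (mem_pPow_limit hσ).mpr fun ρ hρ =>
      pPow_antitone (Order.le_succ ρ) (hsmul ρ hρ)

lemma map_walkerTop_mem_pPow (f : WalkerModule R p β →ₗ[R] G) :
    f (walkerTop R p β) ∈ pPow R p G β :=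
  map_walkerMk_mem_pPow f (root β)

lemma smul_map_walkerTop (f : WalkerModule R p β →ₗ[R] G) : p • f (walkerTop R p β) = 0 := by
  rw [← map_smul, smul_walkerTop, map_zero]

end WalkerModule

namespace WalkerGen

variable {R : Type u} [CommRing R] {p : R} {β : Ordinal.{w}} {G : Type*} [AddCommGroup G]
  [Module R G]

noncomputable def chooseCompatible (P : WalkerGen β → G → Prop) (x₀ : G) (h₀ : P (root β) x₀)
    (hstep : ∀ g : WalkerGen β, g.1 ≠ [] → ∀ x, P g.parent x → ∃ y, P g y ∧ p • y = x)
    (g : WalkerGen β) : {x : G // P g x} :=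
  if hg : g.1 = [] then ⟨x₀, eq_root hg ▸ h₀⟩
  else
    have x := chooseCompatible P x₀ h₀ hstep g.parent
    ⟨(hstep g hg x.1 x.2).choose, (hstep g hg x.1 x.2).choose_spec.1⟩
termination_by g.1.length
decreasing_by exact length_parent_lt g hg

end WalkerGen

open WalkerGen in
lemma exists_walkerHom (R : Type u) [CommRing R] {p : R} {β : Ordinal.{w}} {G : Type*}
    [AddCommGroup G] [Module R G] (P : WalkerGen β → G → Prop) (x₀ : G) (h₀ : P (root β) x₀)
    (hx₀ : p • x₀ = 0)
    (hstep : ∀ g : WalkerGen β, g.1 ≠ [] → ∀ x, P g.parent x → ∃ y, P g y ∧ p • y = x) :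
    ∃ f : WalkerModule R p β →ₗ[R] G,
      f (walkerTop R p β) = x₀ ∧ ∀ g, P g (f (walkerMk R p β g)) := by
  set v := fun g => (WalkerGen.chooseCompatible P x₀ h₀ hstep g).1
  have hroot : v (root β) = x₀ := by
    simp only [v]
    rw [WalkerGen.chooseCompatible]
    split_ifs with h
    · rfl
    · exact absurd rfl h
  have hparent : ∀ g : WalkerGen β, g.1 ≠ [] → p • v g = v g.parent := fun g hg => by
    simp only [v]
    rw [WalkerGen.chooseCompatible, dif_neg hg]
    exact (hstep g hg _ (WalkerGen.chooseCompatible P x₀ h₀ hstep g.parent).2).choose_spec.2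
  refine ⟨walkerLift R p v (hroot ▸ hx₀) hparent, ?_, fun g => ?_⟩
  · exact (walkerLift_walkerMk _ _ _ (root β)).trans hroot
  · rw [walkerLift_walkerMk]
    exact (WalkerGen.chooseCompatible P x₀ h₀ hstep g).2

lemma exists_walkerHom_walkerTop_eq {R : Type u} [CommRing R] {p : R} {β : Ordinal.{w}}
    {G : Type*} [AddCommGroup G] [Module R G] {c : G} (hc : c ∈ pPow R p G β)
    (hpc : p • c = 0) : ∃ f : WalkerModule R p β →ₗ[R] G, f (walkerTop R p β) = c :=
  let ⟨f, hf, _⟩ := exists_walkerHom R (fun g x => x ∈ pPow R p G g.label) c hc hpc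
    fun g hg _ hx => exists_smul_eq_of_mem_pPow (g.label_lt_label_parent hg) hx
  ⟨f, hf⟩

section Balanced

open LinearMap (ker)

variable {R : Type u} [CommRing R] {p : R} {lam : Ordinal.{w}} {B C : Type*}
  [AddCommGroup B] [Module R B] [AddCommGroup C] [Module R C] {π : B →ₗ[R] C}

lemma pPow_quotient_ker_eq_iff (hπ : Function.Surjective π) (σ : Ordinal.{w}) :
    pPow R p (B ⧸ ker π) σ = (pPow R p B σ ⊔ ker π).map (ker π).mkQ ↔
      pPow R p C σ ≤ (pPow R p B σ).map π := by
  set e := π.quotKerEquivOfSurjective hπ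
  have he : (e : B ⧸ ker π →ₗ[R] C) ∘ₗ (ker π).mkQ = π := rfl
  rw [← (Submodule.map_injective_of_injective e.injective).eq_iff, map_pPow_equiv,
    ← Submodule.map_comp, he, Submodule.map_sup, LinearMap.le_ker_iff_map.mp le_rfl, sup_bot_eq]
  exact ⟨le_of_eq, fun h => le_antisymm h (map_pPow_le π σ)⟩

lemma isLamBalanced_ker_iff (hπ : Function.Surjective π) :
    IsLamBalanced R p lam (ker π) ↔ ∀ σ < lam,
      pPow R p B σ ⊓ ker π ≤ (pPow R p (ker π) σ).map (ker π).subtype ∧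
        pPow R p C σ ≤ (pPow R p B σ).map π :=
  forall₂_congr fun σ _ => and_congr
    ⟨le_of_eq, fun h => le_antisymm h (map_subtype_pPow_le _ σ)⟩
    (pPow_quotient_ker_eq_iff hπ σ)

lemma inf_le_map_subtype_pPow {N : Submodule R B} {σ : Ordinal.{w}}
    (hdiv : ∀ τ < σ, ∀ x ∈ N, x ∈ pPow R p B (τ + 1) →
      ∃ y ∈ N, y ∈ pPow R p B τ ∧ p • y = x) :
    pPow R p B σ ⊓ N ≤ (pPow R p N σ).map N.subtype := by
  induction σ using Ordinal.limitRecOn with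
  | zero => exact fun x hx => ⟨⟨x, hx.2⟩, by simp [pPow_zero], rfl⟩
  | add_one σ ih =>
    rintro x ⟨hxσ, hx⟩
    obtain ⟨y, hyN, hy, rfl⟩ := hdiv σ (lt_add_one σ) x hx hxσ
    obtain ⟨z, hz, rfl⟩ :=
      ih (fun τ hτ => hdiv τ (hτ.trans (lt_add_one σ))) ⟨hy, hyN⟩
    exact ⟨p • z, mem_pPow_succ.mpr ⟨z, hz, rfl⟩, map_smul _ _ _⟩
  | limit σ hσ ih =>
    rintro x ⟨hxσ, hx⟩
    refine ⟨⟨x, hx⟩, (mem_pPow_limit hσ).mpr fun ρ hρ => ?_, rfl⟩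
    obtain ⟨z, hz, hzx⟩ := ih ρ hρ (fun τ hτ => hdiv τ (hτ.trans hρ))
      ⟨(mem_pPow_limit hσ).mp hxσ ρ hρ, hx⟩
    rwa [← show z = ⟨x, hx⟩ from Subtype.ext hzx]

lemma IsLamBalanced.exists_lift_step (hbal : IsLamBalanced R p lam (ker π))
    (hπ : Function.Surjective π) (hlam : Order.IsSuccLimit lam) {τ : Ordinal.{w}}
    (hτ : τ < lam) {c : C} (hc : c ∈ pPow R p C τ) {x : B} (hx : x ∈ pPow R p B (τ + 1))
    (hxc : π x = p • c) : ∃ y ∈ pPow R p B τ, π y = c ∧ p • y = x := by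
  rw [isLamBalanced_ker_iff hπ] at hbal
  obtain ⟨b, hb, rfl⟩ := (hbal τ hτ).2 hc
  have hker : x - p • b ∈ pPow R p B (τ + 1) ⊓ ker π :=
    ⟨sub_mem hx (mem_pPow_succ.mpr ⟨b, hb, rfl⟩), by simp [hxc]⟩
  obtain ⟨_, hn, hnx⟩ := (hbal (τ + 1) (Order.succ_eq_add_one τ ▸ hlam.succ_lt hτ)).1 hker
  obtain ⟨m, hm, rfl⟩ := mem_pPow_succ.mp hn
  refine ⟨b + m, add_mem hb (map_pPow_le (ker π).subtype τ ⟨m, hm, rfl⟩), by simp, ?_⟩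
  rw [smul_add, ← Submodule.coe_smul, ← Submodule.subtype_apply, hnx]
  exact add_sub_cancel _ _

lemma IsLamBalanced.exists_walker_lift (hbal : IsLamBalanced R p lam (ker π))
    (hπ : Function.Surjective π) (hlam : Order.IsSuccLimit lam) {β : Ordinal.{w}}
    (hβ : β < lam) (f : WalkerModule R p β →ₗ[R] C) :
    ∃ g : WalkerModule R p β →ₗ[R] B, π ∘ₗ g = f := by
  obtain ⟨x₀, hx₀, hπx₀, hpx₀⟩ := hbal.exists_lift_step hπ hlam hβ
    (map_walkerTop_mem_pPow f) (zero_mem _) (by rw [map_zero, smul_map_walkerTop])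
  obtain ⟨g, -, hg⟩ := exists_walkerHom R
    (fun g x => x ∈ pPow R p B g.label ∧ π x = f (walkerMk R p β g)) x₀ ⟨hx₀, hπx₀⟩ hpx₀
    fun g hg x ⟨hx, hπx⟩ => by
      obtain ⟨y, hy, hπy, hpy⟩ := hbal.exists_lift_step hπ hlam (g.label_le.trans_lt hβ)
        (map_walkerMk_mem_pPow f g)
        (pPow_antitone (Order.add_one_le_of_lt (g.label_lt_label_parent hg)) hx)
        (by rw [hπx, ← map_smul, smul_walkerMk_of_ne_nil g hg])
      exact ⟨y, ⟨hy, hπy⟩, hpy⟩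
  exact ⟨g, walkerModule_hom_ext fun x => (hg x).2⟩

lemma exists_socle_lift_of_walker_lift {σ : Ordinal.{w}}
    (hlift : ∀ f : WalkerModule R p σ →ₗ[R] C, ∃ g : WalkerModule R p σ →ₗ[R] B, π ∘ₗ g = f)
    {c : C} (hc : c ∈ pPow R p C σ) (hpc : p • c = 0) :
    ∃ b ∈ pPow R p B σ, p • b = 0 ∧ π b = c := by
  obtain ⟨f, rfl⟩ := exists_walkerHom_walkerTop_eq hc hpc
  obtain ⟨g, rfl⟩ := hlift f
  exact ⟨g (walkerTop R p σ), map_walkerTop_mem_pPow g, smul_map_walkerTop g, rfl⟩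

lemma exists_smul_eq_of_socle_lift {τ : Ordinal.{w}}
    (hsoc : ∀ c ∈ pPow R p C τ, p • c = 0 → ∃ b ∈ pPow R p B τ, p • b = 0 ∧ π b = c)
    {x : B} (hx : x ∈ ker π) (hxτ : x ∈ pPow R p B (τ + 1)) :
    ∃ y ∈ ker π, y ∈ pPow R p B τ ∧ p • y = x := by
  obtain ⟨y, hy, rfl⟩ := mem_pPow_succ.mp hxτ
  obtain ⟨z, hz, hpz, hπz⟩ :=
    hsoc (π y) (map_pPow_le π τ ⟨y, hy, rfl⟩) (by rw [← map_smul]; exact hx)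
  exact ⟨y - z, by simp [hπz], sub_mem hy hz, by simp [smul_sub, hpz]⟩

lemma pPow_le_map_of_socle_lift [IsDomain R] [IsDiscreteValuationRing R] (hp : Irreducible p)
    (hC : Module.IsTorsion R C) (hlam : Order.IsSuccLimit lam)
    (hsoc : ∀ σ < lam, ∀ c ∈ pPow R p C σ, p • c = 0 → c ∈ (pPow R p B σ).map π)
    {σ : Ordinal.{w}} (hσ : σ < lam) : pPow R p C σ ≤ (pPow R p B σ).map π := by
  intro c hc
  obtain ⟨n, hn⟩ := exists_pow_smul_eq_zero_of_isTorsion hp hC c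
  induction n generalizing σ c with
  | zero =>
    rw [pow_zero, one_smul] at hn
    exact hn ▸ zero_mem _
  | succ n ih =>
    obtain ⟨b, hb, hπb⟩ := ih (Order.succ_eq_add_one σ ▸ hlam.succ_lt hσ)
      (mem_pPow_succ.mpr ⟨c, hc, rfl⟩) (by rw [← mul_smul, ← pow_succ, hn])
    obtain ⟨b', hb', rfl⟩ := mem_pPow_succ.mp hb
    obtain ⟨b'', hb'', hπb''⟩ := hsoc σ hσ (c - π b')
      (sub_mem hc (map_pPow_le π σ ⟨b', hb', rfl⟩))
      (by rw [smul_sub, ← map_smul, hπb]; exact sub_self _)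
    exact ⟨b' + b'', add_mem hb' hb'', by rw [map_add, hπb'']; exact add_sub_cancel _ _⟩

theorem isLamBalanced_ker_iff_forall_walker_lift [IsDomain R] [IsDiscreteValuationRing R]
    (hp : Irreducible p) (hlam : Order.IsSuccLimit lam) (hπ : Function.Surjective π)
    (hC : Module.IsTorsion R C) :
    IsLamBalanced R p lam (ker π) ↔ ∀ β < lam, ∀ f : WalkerModule R p β →ₗ[R] C,
      ∃ g : WalkerModule R p β →ₗ[R] B, π ∘ₗ g = f := by
  refine ⟨fun hbal β hβ => hbal.exists_walker_lift hπ hlam hβ, fun hlift => ?_⟩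
  have hsoc : ∀ σ < lam, ∀ c ∈ pPow R p C σ, p • c = 0 →
      ∃ b ∈ pPow R p B σ, p • b = 0 ∧ π b = c :=
    fun σ hσ _ => exists_socle_lift_of_walker_lift (hlift σ hσ)
  refine (isLamBalanced_ker_iff hπ).mpr fun σ hσ => ⟨?_, ?_⟩
  · exact inf_le_map_subtype_pPow fun τ hτ _ hx hxτ =>
      exists_smul_eq_of_socle_lift (hsoc τ (hτ.trans hσ)) hx hxτ
  · refine pPow_le_map_of_socle_lift hp hC hlam (fun τ hτ c hc hpc => ?_) hσ
    obtain ⟨b, hb, -, rfl⟩ := hsoc τ hτ c hc hpc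
    exact ⟨b, hb, rfl⟩

end Balanced

lemma exists_comp_eq_of_comp_eq_zero {R : Type u} [CommRing R] {M A B C : Type*}
    [AddCommGroup M] [Module R M] [AddCommGroup A] [Module R A] [AddCommGroup B] [Module R B]
    [AddCommGroup C] [Module R C] {i : A →ₗ[R] B} {π : B →ₗ[R] C} (hi : Function.Injective i)
    (hexact : LinearMap.range i = LinearMap.ker π) {g : M →ₗ[R] B} (hg : π ∘ₗ g = 0) :
    ∃ h : M →ₗ[R] A, i ∘ₗ h = g := by
  have hmem : ∀ x, g x ∈ LinearMap.range i := fun x => hexact ▸ LinearMap.congr_fun hg x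
  refine ⟨(LinearEquiv.ofInjective i hi).symm ∘ₗ g.codRestrict _ hmem, LinearMap.ext fun x => ?_⟩
  simp

theorem stmt6_general (R : Type u) [CommRing R] [IsDomain R] [IsDiscreteValuationRing R]
    (p : R) (hp : Irreducible p) (lam : Ordinal.{w}) (hlam : Order.IsSuccLimit lam)
    (A B C : Type v) [AddCommGroup A] [Module R A] [AddCommGroup B] [Module R B]
    [AddCommGroup C] [Module R C]
    (hC : Module.IsTorsion R C)
    (i : A →ₗ[R] B) (π : B →ₗ[R] C)
    (hi : Function.Injective i) (hπ : Function.Surjective π)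
    (hexact : LinearMap.range i = LinearMap.ker π) :
    (IsLamBalanced R p lam (LinearMap.range i) ↔
      ∀ β < lam, ∀ f : WalkerModule R p β →ₗ[R] C,
        ∃ g : WalkerModule R p β →ₗ[R] B, π ∘ₗ g = f) ∧
    (IsLamBalanced R p lam (LinearMap.range i) ↔
      ∀ β < lam,
        (Function.Injective fun h : WalkerModule R p β →ₗ[R] A => i ∘ₗ h) ∧
        (∀ g : WalkerModule R p β →ₗ[R] B, π ∘ₗ g = 0 →
          ∃ h : WalkerModule R p β →ₗ[R] A, i ∘ₗ h = g) ∧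
        (Function.Surjective fun g : WalkerModule R p β →ₗ[R] B => π ∘ₗ g)) := by
  rw [hexact]
  have hlift := isLamBalanced_ker_iff_forall_walker_lift (lam := lam) hp hlam hπ hC
  refine ⟨hlift, hlift.trans ⟨fun H β hβ => ⟨?_, ?_, H β hβ⟩, fun H β hβ => (H β hβ).2.2⟩⟩
  · exact hi.injective_linearMapComp_left
  · exact fun g hg => exists_comp_eq_of_comp_eq_zero hi hexact hg

theorem stmt6 (R : Type u) [CommRing R] [IsDomain R] [IsDiscreteValuationRing R]
    (p : R) (hp : Irreducible p) (lam : Ordinal.{w}) (hlam : Order.IsSuccLimit lam)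
    (A B C : Type v) [AddCommGroup A] [Module R A] [AddCommGroup B] [Module R B]
    [AddCommGroup C] [Module R C]
    (hA : Module.IsTorsion R A) (hB : Module.IsTorsion R B) (hC : Module.IsTorsion R C)
    (i : A →ₗ[R] B) (π : B →ₗ[R] C)
    (hi : Function.Injective i) (hπ : Function.Surjective π)
    (hexact : LinearMap.range i = LinearMap.ker π) :
    (IsLamBalanced R p lam (LinearMap.range i) ↔
      ∀ β < lam, ∀ f : WalkerModule R p β →ₗ[R] C,
        ∃ g : WalkerModule R p β →ₗ[R] B, π ∘ₗ g = f) ∧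
    (IsLamBalanced R p lam (LinearMap.range i) ↔
      ∀ β < lam,
        (Function.Injective fun h : WalkerModule R p β →ₗ[R] A => i ∘ₗ h) ∧
        (∀ g : WalkerModule R p β →ₗ[R] B, π ∘ₗ g = 0 →
          ∃ h : WalkerModule R p β →ₗ[R] A, i ∘ₗ h = g) ∧
        (Function.Surjective fun g : WalkerModule R p β →ₗ[R] B => π ∘ₗ g)) :=
  stmt6_general R p hp lam hlam A B C hC i π hi hπ hexact
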